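/- If L : I × I' → ℝ≥0 and M : I' × I'' → ℝ≥0 are totally positive of order 2 (TP₂) functions on products of intervals, and η is a σ-finite measure on I' such that N(x,y) := ∫ L(x,z) M(z,y) dη(z) is finite for all x ∈ I, y ∈ I'', then N is TP₂ on I × I''. -/
import Mathlib


open MeasureTheory Set Filter

/-- `L` is totally positive of order 2 on `I × J`. -/
def IsTP2 (I J : Set ℝ) (L : ℝ → ℝ → ℝ) : Prop :=
  ∀ x₁ ∈ I, ∀ x₂ ∈ I, ∀ y₁ ∈ J, ∀ y₂ ∈ J,
    x₁ ≤ x₂ → y₁ ≤ y₂ → L x₁ y₂ * L x₂ y₁ ≤ L x₁ y₁ * L x₂ y₂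

theorem stmt0 (I I' I'' : Set ℝ)
    (hI : I.OrdConnected) (hI' : I'.OrdConnected) (hI'' : I''.OrdConnected)
    (L M : ℝ → ℝ → ℝ)
    (hL0 : ∀ x ∈ I, ∀ z ∈ I', 0 ≤ L x z)
    (hM0 : ∀ z ∈ I', ∀ y ∈ I'', 0 ≤ M z y)
    (hL : IsTP2 I I' L) (hM : IsTP2 I' I'' M)
    (η : Measure ℝ) [SigmaFinite η]
    (hInt : ∀ x ∈ I, ∀ y ∈ I'', IntegrableOn (fun z => L x z * M z y) I' η) :
    IsTP2 I I'' (fun x y => ∫ z in I', L x z * M z y ∂η) := by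
  intro x₁ hx₁ x₂ hx₂ y₁ hy₁ y₂ hy₂ hx hy
  set μ := η.restrict I' with hμdef
  have h11 : Integrable (fun z => L x₁ z * M z y₁) μ := hInt x₁ hx₁ y₁ hy₁
  have h12 : Integrable (fun z => L x₁ z * M z y₂) μ := hInt x₁ hx₁ y₂ hy₂
  have h21 : Integrable (fun z => L x₂ z * M z y₁) μ := hInt x₂ hx₂ y₁ hy₁
  have h22 : Integrable (fun z => L x₂ z * M z y₂) μ := hInt x₂ hx₂ y₂ hy₂
  -- the two product integrands
  set H : ℝ × ℝ → ℝ := fun zw =>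
    (L x₁ zw.1 * M zw.1 y₁) * (L x₂ zw.2 * M zw.2 y₂) -
      (L x₁ zw.1 * M zw.1 y₂) * (L x₂ zw.2 * M zw.2 y₁) with hHdef
  have hHi : Integrable H (μ.prod μ) := (h11.mul_prod h22).sub (h12.mul_prod h21)
  have hHswapi : Integrable (H ∘ Prod.swap) (μ.prod μ) := hHi.swap
  have hP1 : ∫ (a : ℝ × ℝ), L x₁ a.1 * M a.1 y₁ * (L x₂ a.2 * M a.2 y₂) ∂(μ.prod μ) =
      (∫ z, L x₁ z * M z y₁ ∂μ) * (∫ z, L x₂ z * M z y₂ ∂μ) :=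
    integral_prod_mul (fun z => L x₁ z * M z y₁) (fun z => L x₂ z * M z y₂)
  have hP2 : ∫ (a : ℝ × ℝ), L x₁ a.1 * M a.1 y₂ * (L x₂ a.2 * M a.2 y₁) ∂(μ.prod μ) =
      (∫ z, L x₁ z * M z y₂ ∂μ) * (∫ z, L x₂ z * M z y₁ ∂μ) :=
    integral_prod_mul (fun z => L x₁ z * M z y₂) (fun z => L x₂ z * M z y₁)
  have hAB : ∫ zw, H zw ∂(μ.prod μ) =
      (∫ z, L x₁ z * M z y₁ ∂μ) * (∫ z, L x₂ z * M z y₂ ∂μ) -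
      (∫ z, L x₁ z * M z y₂ ∂μ) * (∫ z, L x₂ z * M z y₁ ∂μ) := by
    rw [hHdef, integral_sub (h11.mul_prod h22) (h12.mul_prod h21), hP1, hP2]
  have hswap : ∫ zw, (H ∘ Prod.swap) zw ∂(μ.prod μ) = ∫ zw, H zw ∂(μ.prod μ) :=
    integral_prod_swap H
  have hsum : ∫ zw, H zw ∂(μ.prod μ) + ∫ zw, (H ∘ Prod.swap) zw ∂(μ.prod μ)
      = ∫ zw, (H zw + (H ∘ Prod.swap) zw) ∂(μ.prod μ) :=
    (integral_add hHi hHswapi).symm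
  have hK : ∀ zw : ℝ × ℝ, H zw + (H ∘ Prod.swap) zw =
      (L x₁ zw.1 * L x₂ zw.2 - L x₁ zw.2 * L x₂ zw.1) *
        (M zw.1 y₁ * M zw.2 y₂ - M zw.2 y₁ * M zw.1 y₂) := by
    intro zw; simp only [hHdef, Function.comp, Prod.fst_swap, Prod.snd_swap]; ring
  have hKnonneg : 0 ≤ ∫ zw, (H zw + (H ∘ Prod.swap) zw) ∂(μ.prod μ) := by
    have hprod : μ.prod μ = (η.prod η).restrict (I' ×ˢ I') := by
      rw [hμdef, Measure.prod_restrict]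
    rw [hprod]
    refine setIntegral_nonneg (hI'.measurableSet.prod hI'.measurableSet) ?_
    rintro ⟨z, w⟩ ⟨hz, hw⟩
    rw [hK]
    rcases le_total z w with hzw | hwz
    · have h1 := hL x₁ hx₁ x₂ hx₂ z hz w hw hx hzw
      have h2 := hM z hz w hw y₁ hy₁ y₂ hy₂ hzw hy
      nlinarith [h1, h2]
    · have h1 := hL x₁ hx₁ x₂ hx₂ w hw z hz hx hwz
      have h2 := hM w hw z hz y₁ hy₁ y₂ hy₂ hwz hy
      nlinarith [h1, h2]
  have hpos : 0 ≤ ∫ zw, H zw ∂(μ.prod μ) := by linarith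
  rw [hAB] at hpos
  show (∫ z in I', L x₁ z * M z y₂ ∂η) * (∫ z in I', L x₂ z * M z y₁ ∂η) ≤
      (∫ z in I', L x₁ z * M z y₁ ∂η) * (∫ z in I', L x₂ z * M z y₂ ∂η)
  linarith
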